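/- Let M > 0. For smooth φ : ℝ × ℝ → ℝ (written φ(t,s)) define the radial Schwarzschild wave operator (□φ)(t,s) := −(1−μ(s))^{−1} ∂_t²φ + (1−μ(s))^{−1} r(s)^{−2} ∂_s( r(s)² ∂_sφ ), and the scaling field Sφ := t ∂_tφ + s ∂_sφ. Then for every smooth φ and every (t,s): □(Sφ) − S(□φ) = (2 + s μ(s)/r(s)) · (□φ) + (2/r(s)) · ( s/r(s) − 1 − 2 s μ(s)/r(s) ) · ∂_sφ. -/

import Mathlib

open Real MeasureTheory

noncomputable section

/-- partial derivative in the first (time) variable -/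
def pd_t (φ : ℝ → ℝ → ℝ) : ℝ → ℝ → ℝ := fun t s => deriv (fun t' => φ t' s) t

/-- partial derivative in the second (tortoise) variable -/
def pd_s (φ : ℝ → ℝ → ℝ) : ℝ → ℝ → ℝ := fun t s => deriv (fun s' => φ t s') s

/-- the scaling vector field `S ξ = t ∂_t ξ + s ∂_s ξ` -/
def Svf (φ : ℝ → ℝ → ℝ) : ℝ → ℝ → ℝ := fun t s => t * pd_t φ t s + s * pd_s φ t s

/-- `r` is the Schwarzschild area-radius of mass `M` in the Regge-Wheeler tortoise
coordinate: `r(s) > 2M`, `r' = 1 - 2M/r`, `r(0) = 3M`. -/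
def IsTortoise (M : ℝ) (r : ℝ → ℝ) : Prop :=
  (∀ s, 2 * M < r s) ∧ (∀ s, HasDerivAt r (1 - 2 * M / r s) s) ∧ r 0 = 3 * M

/-- `μ(s) = 2M / r(s)` -/
def muS (M : ℝ) (r : ℝ → ℝ) (s : ℝ) : ℝ := 2 * M / r s

/-- a spherically symmetric solution of the wave equation on the exterior of the
Schwarzschild spacetime: smooth, satisfying `∂_t²φ = r⁻² ∂_s(r² ∂_s φ)`, and supported
away from spatial infinity. -/
def IsWaveSol (r : ℝ → ℝ) (φ : ℝ → ℝ → ℝ) : Prop :=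
  ContDiff ℝ (⊤ : ℕ∞) (Function.uncurry φ) ∧
  (∀ t s, pd_t (pd_t φ) t s = ((r s) ^ 2)⁻¹ * deriv (fun x => (r x) ^ 2 * pd_s φ t x) s) ∧
  ∃ S₀ : ℝ, ∀ t s, S₀ + |t - 1| ≤ s → φ t s = 0

/-- the radial Schwarzschild wave operator
`□φ = -(1-μ)⁻¹ ∂_t²φ + (1-μ)⁻¹ r⁻² ∂_s(r² ∂_sφ)`. -/
def Box (M : ℝ) (r : ℝ → ℝ) (φ : ℝ → ℝ → ℝ) : ℝ → ℝ → ℝ := fun t s =>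
  -(1 - muS M r s)⁻¹ * pd_t (pd_t φ) t s
    + (1 - muS M r s)⁻¹ * ((r s) ^ 2)⁻¹ * deriv (fun x => (r x) ^ 2 * pd_s φ t x) s

def myDv (G : ℝ × ℝ → ℝ) (v : ℝ × ℝ) : ℝ × ℝ → ℝ := fun p => fderiv ℝ G p v

lemma myDv_contDiff {G : ℝ × ℝ → ℝ} (hG : ContDiff ℝ (⊤ : ℕ∞) G) (v : ℝ × ℝ) :
    ContDiff ℝ (⊤ : ℕ∞) (myDv G v) :=
  (hG.fderiv_right (m := (⊤ : ℕ∞)) (by simp)).clm_apply contDiff_const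

lemma myHasDerivAt_fst {G : ℝ × ℝ → ℝ} (hG : ContDiff ℝ (⊤ : ℕ∞) G) (t s : ℝ) :
    HasDerivAt (fun t' => G (t', s)) (myDv G (1, 0) (t, s)) t :=
  (hG.differentiable (by simp) (t, s)).hasFDerivAt.comp_hasDerivAt t
    ((hasDerivAt_id t).prodMk (hasDerivAt_const t s))

lemma myHasDerivAt_snd {G : ℝ × ℝ → ℝ} (hG : ContDiff ℝ (⊤ : ℕ∞) G) (t s : ℝ) :
    HasDerivAt (fun s' => G (t, s')) (myDv G (0, 1) (t, s)) s :=
  (hG.differentiable (by simp) (t, s)).hasFDerivAt.comp_hasDerivAt s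
    ((hasDerivAt_const s t).prodMk (hasDerivAt_id s))

lemma myDv_symm {G : ℝ × ℝ → ℝ} (hG : ContDiff ℝ (⊤ : ℕ∞) G) (v w p : ℝ × ℝ) :
    myDv (myDv G v) w p = myDv (myDv G w) v p := by
  have hd : ∀ y, HasFDerivAt G (fderiv ℝ G y) y := fun y =>
    (hG.differentiable (by simp) y).hasFDerivAt
  have h2 : HasFDerivAt (fderiv ℝ G) (fderiv ℝ (fderiv ℝ G) p) p :=
    ((hG.fderiv_right (m := (⊤ : ℕ∞)) (by simp)).differentiable (by simp) p).hasFDerivAt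
  have key : ∀ u : ℝ × ℝ, fderiv ℝ (fun q => fderiv ℝ G q u) p =
      (ContinuousLinearMap.apply ℝ ℝ u).comp (fderiv ℝ (fderiv ℝ G) p) := by
    intro u
    exact (((ContinuousLinearMap.apply ℝ ℝ u).hasFDerivAt).comp p h2).fderiv
  show fderiv ℝ (fun q => fderiv ℝ G q v) p w = fderiv ℝ (fun q => fderiv ℝ G q w) p v
  rw [key v, key w]
  simp only [ContinuousLinearMap.coe_comp', Function.comp_apply,
    ContinuousLinearMap.apply_apply]
  exact second_derivative_symmetric hd h2 w v


set_option maxHeartbeats 2000000 in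
/-- Proposition 4, part 1 of the paper (restricted to spherically symmetric
functions): the commutator of the Schwarzschild wave operator with the scaling
vector field `S = t ∂_t + r* ∂_{r*}`. -/
theorem scaling_commutator_identity
    (M : ℝ) (hM : 0 < M) (r : ℝ → ℝ) (hr : IsTortoise M r)
    (φ : ℝ → ℝ → ℝ) (hφ : ContDiff ℝ (⊤ : ℕ∞) (Function.uncurry φ)) :
    ∀ t s : ℝ,
      Box M r (Svf φ) t s - Svf (Box M r φ) t s
        = (2 + s * muS M r s / r s) * Box M r φ t s
          + (2 / r s) * (s / r s - 1 - 2 * s * muS M r s / r s) * pd_s φ t s := by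
  obtain ⟨hr2M, hrd, -⟩ := hr
  have hrpos : ∀ x, 0 < r x := fun x => lt_trans (by linarith) (hr2M x)
  have hrne : ∀ x, r x ≠ 0 := fun x => ne_of_gt (hrpos x)
  have h1ne : ∀ x, (1 : ℝ) - 2 * M / r x ≠ 0 := by
    intro x
    have h := (div_lt_one (hrpos x)).2 (hr2M x)
    intro hc; rw [sub_eq_zero] at hc
    rw [← hc] at h; exact lt_irrefl _ h
  have hsub : ∀ x, r x - 2 * M ≠ 0 := fun x => sub_ne_zero_of_ne (ne_of_gt (hr2M x))
  have hrw : ∀ x, (1:ℝ) - 2 * M / r x = (r x - 2 * M) / r x := fun x => by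
    rw [sub_div, div_self (hrne x)]
  set F := Function.uncurry φ with hF
  have h1t : ContDiff ℝ (⊤ : ℕ∞) (myDv F (1,0)) := myDv_contDiff hφ _
  have h1s : ContDiff ℝ (⊤ : ℕ∞) (myDv F (0,1)) := myDv_contDiff hφ _
  have h2tt : ContDiff ℝ (⊤ : ℕ∞) (myDv (myDv F (1,0)) (1,0)) := myDv_contDiff h1t _
  have h2ts : ContDiff ℝ (⊤ : ℕ∞) (myDv (myDv F (1,0)) (0,1)) := myDv_contDiff h1t _
  have h2st : ContDiff ℝ (⊤ : ℕ∞) (myDv (myDv F (0,1)) (1,0)) := myDv_contDiff h1s _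
  have h2ss : ContDiff ℝ (⊤ : ℕ∞) (myDv (myDv F (0,1)) (0,1)) := myDv_contDiff h1s _
  -- first partials
  have hpt : ∀ a b : ℝ, pd_t φ a b = myDv F (1,0) (a,b) := fun a b =>
    (myHasDerivAt_fst hφ a b).deriv
  have hps : ∀ a b : ℝ, pd_s φ a b = myDv F (0,1) (a,b) := fun a b =>
    (myHasDerivAt_snd hφ a b).deriv
  -- second time partial
  have hptt : ∀ a b : ℝ, pd_t (pd_t φ) a b = myDv (myDv F (1,0)) (1,0) (a,b) := by
    intro a b
    have hfun : (fun t' => pd_t φ t' b) = fun t' => myDv F (1,0) (t', b) :=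
      funext fun t' => hpt t' b
    show deriv (fun t' => pd_t φ t' b) a = _
    rw [hfun]
    exact (myHasDerivAt_fst h1t a b).deriv
  -- the radial second-order term for φ
  have hGs : ∀ a b : ℝ, deriv (fun x => (r x) ^ 2 * pd_s φ a x) b
      = 2 * r b * (1 - 2 * M / r b) * myDv F (0,1) (a,b)
        + r b ^ 2 * myDv (myDv F (0,1)) (0,1) (a,b) := by
    intro a b
    have hfun : (fun x => (r x) ^ 2 * pd_s φ a x)
        = fun x => (r x) ^ 2 * myDv F (0,1) (a, x) :=
      funext fun x => by rw [hps a x]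
    rw [hfun]
    exact (((hrd b).pow 2).mul (myHasDerivAt_snd h1s a b)).deriv.trans
      (by simp only [Pi.pow_apply]; push_cast; ring)
  -- Box φ in canonical form
  have hBoxAll : ∀ a b : ℝ, Box M r φ a b
      = -(1 - 2 * M / r b)⁻¹ * myDv (myDv F (1,0)) (1,0) (a,b)
        + (2 / r b) * myDv F (0,1) (a,b)
        + (1 - 2 * M / r b)⁻¹ * myDv (myDv F (0,1)) (0,1) (a,b) := by
    intro a b
    show -(1 - muS M r b)⁻¹ * pd_t (pd_t φ) a b
        + (1 - muS M r b)⁻¹ * ((r b) ^ 2)⁻¹ * deriv (fun x => (r x) ^ 2 * pd_s φ a x) b = _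
    rw [hptt a b, hGs a b]
    simp only [muS]
    rw [hrw b]
    field_simp [hrne b, hsub b]
    ring
  intro t s
  -- t-derivative of Box φ
  have hBt : pd_t (Box M r φ) t s
      = -(1 - 2 * M / r s)⁻¹ * myDv (myDv (myDv F (1,0)) (1,0)) (1,0) (t,s)
        + (2 / r s) * myDv (myDv F (0,1)) (1,0) (t,s)
        + (1 - 2 * M / r s)⁻¹ * myDv (myDv (myDv F (0,1)) (0,1)) (1,0) (t,s) := by
    have hfun : (fun t' => Box M r φ t' s) = fun t' =>
        -(1 - 2 * M / r s)⁻¹ * myDv (myDv F (1,0)) (1,0) (t',s)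
        + (2 / r s) * myDv F (0,1) (t',s)
        + (1 - 2 * M / r s)⁻¹ * myDv (myDv F (0,1)) (0,1) (t',s) :=
      funext fun t' => hBoxAll t' s
    show deriv (fun t' => Box M r φ t' s) t = _
    rw [hfun]
    exact ((((hasDerivAt_const t (-(1 - 2 * M / r s)⁻¹)).mul (myHasDerivAt_fst h2tt t s)).add
      ((hasDerivAt_const t (2 / r s)).mul (myHasDerivAt_fst h1s t s))).add
      ((hasDerivAt_const t ((1 - 2 * M / r s)⁻¹)).mul (myHasDerivAt_fst h2ss t s))).deriv.trans
      (by ring)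
  -- s-derivative of Box φ
  have hud : HasDerivAt (fun s' => (1:ℝ) - 2 * M / r s')
      (2 * M * (1 - 2 * M / r s) / r s ^ 2) s := by
    have h := (hasDerivAt_const s (1:ℝ)).sub
      ((hasDerivAt_const s (2 * M)).div (hrd s) (hrne s))
    refine h.congr_deriv ?_
    ring
  have hainv : HasDerivAt (fun s' => ((1:ℝ) - 2 * M / r s')⁻¹)
      (-(2 * M) / (r s ^ 2 * (1 - 2 * M / r s))) s := by
    have h := hud.inv (h1ne s)
    refine h.congr_deriv ?_
    rw [hrw s]
    field_simp [hrne s, hsub s]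
  have h2rd : HasDerivAt (fun s' => 2 / r s')
      (-(2 * (1 - 2 * M / r s)) / r s ^ 2) s := by
    have h := (hasDerivAt_const s (2:ℝ)).div (hrd s) (hrne s)
    refine h.congr_deriv ?_
    ring
  have hBs : pd_s (Box M r φ) t s
      = (2 * M / (r s ^ 2 * (1 - 2 * M / r s))) * myDv (myDv F (1,0)) (1,0) (t,s)
        - (1 - 2 * M / r s)⁻¹ * myDv (myDv (myDv F (1,0)) (1,0)) (0,1) (t,s)
        - (2 * (1 - 2 * M / r s) / r s ^ 2) * myDv F (0,1) (t,s)
        + (2 / r s) * myDv (myDv F (0,1)) (0,1) (t,s)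
        - (2 * M / (r s ^ 2 * (1 - 2 * M / r s))) * myDv (myDv F (0,1)) (0,1) (t,s)
        + (1 - 2 * M / r s)⁻¹ * myDv (myDv (myDv F (0,1)) (0,1)) (0,1) (t,s) := by
    have hfun : (fun s' => Box M r φ t s') = fun s' =>
        -(1 - 2 * M / r s')⁻¹ * myDv (myDv F (1,0)) (1,0) (t,s')
        + (2 / r s') * myDv F (0,1) (t,s')
        + (1 - 2 * M / r s')⁻¹ * myDv (myDv F (0,1)) (0,1) (t,s') :=
      funext fun s' => hBoxAll t s'
    show deriv (fun s' => Box M r φ t s') s = _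
    rw [hfun]
    exact (((hainv.neg.mul (myHasDerivAt_snd h2tt t s)).add
      (h2rd.mul (myHasDerivAt_snd h1s t s))).add
      (hainv.mul (myHasDerivAt_snd h2ss t s))).deriv.trans (by simp only [Pi.neg_apply]; ring)
  -- partials of Svf φ
  have hSpt : ∀ a b : ℝ, pd_t (Svf φ) a b
      = myDv F (1,0) (a,b) + a * myDv (myDv F (1,0)) (1,0) (a,b)
        + b * myDv (myDv F (0,1)) (1,0) (a,b) := by
    intro a b
    have hfun : (fun t' => Svf φ t' b)
        = fun t' => t' * myDv F (1,0) (t', b) + b * myDv F (0,1) (t', b) :=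
      funext fun t' => by
        show t' * pd_t φ t' b + b * pd_s φ t' b = _
        rw [hpt, hps]
    show deriv (fun t' => Svf φ t' b) a = _
    rw [hfun]
    exact (((hasDerivAt_id a).mul (myHasDerivAt_fst h1t a b)).add
      ((hasDerivAt_const a b).mul (myHasDerivAt_fst h1s a b))).deriv.trans (by simp only [id_eq]; ring)
  have hSps : ∀ a b : ℝ, pd_s (Svf φ) a b
      = a * myDv (myDv F (1,0)) (0,1) (a,b) + myDv F (0,1) (a,b)
        + b * myDv (myDv F (0,1)) (0,1) (a,b) := by
    intro a b
    have hfun : (fun s' => Svf φ a s')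
        = fun s' => a * myDv F (1,0) (a, s') + s' * myDv F (0,1) (a, s') :=
      funext fun s' => by
        show a * pd_t φ a s' + s' * pd_s φ a s' = _
        rw [hpt, hps]
    show deriv (fun s' => Svf φ a s') b = _
    rw [hfun]
    exact (((hasDerivAt_const b a).mul (myHasDerivAt_snd h1t a b)).add
      ((hasDerivAt_id b).mul (myHasDerivAt_snd h1s a b))).deriv.trans (by simp only [id_eq]; ring)
  -- second time partial of Svf φ
  have hStt : pd_t (pd_t (Svf φ)) t s
      = 2 * myDv (myDv F (1,0)) (1,0) (t,s)
        + t * myDv (myDv (myDv F (1,0)) (1,0)) (1,0) (t,s)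
        + s * myDv (myDv (myDv F (0,1)) (1,0)) (1,0) (t,s) := by
    have hfun : (fun t' => pd_t (Svf φ) t' s) = fun t' =>
        myDv F (1,0) (t', s) + t' * myDv (myDv F (1,0)) (1,0) (t',s)
        + s * myDv (myDv F (0,1)) (1,0) (t',s) :=
      funext fun t' => hSpt t' s
    show deriv (fun t' => pd_t (Svf φ) t' s) t = _
    rw [hfun]
    exact (((myHasDerivAt_fst h1t t s).add
      ((hasDerivAt_id t).mul (myHasDerivAt_fst h2tt t s))).add
      ((hasDerivAt_const t s).mul (myHasDerivAt_fst h2st t s))).deriv.trans (by simp only [id_eq]; ring)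
  -- radial second-order term for Svf φ
  have hSGs : deriv (fun x => (r x) ^ 2 * pd_s (Svf φ) t x) s
      = 2 * r s * (1 - 2 * M / r s)
          * (t * myDv (myDv F (1,0)) (0,1) (t,s) + myDv F (0,1) (t,s)
            + s * myDv (myDv F (0,1)) (0,1) (t,s))
        + r s ^ 2 * (t * myDv (myDv (myDv F (1,0)) (0,1)) (0,1) (t,s)
            + 2 * myDv (myDv F (0,1)) (0,1) (t,s)
            + s * myDv (myDv (myDv F (0,1)) (0,1)) (0,1) (t,s)) := by
    have hfun : (fun x => (r x) ^ 2 * pd_s (Svf φ) t x) = fun x =>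
        (r x) ^ 2 * (t * myDv (myDv F (1,0)) (0,1) (t,x) + myDv F (0,1) (t,x)
          + x * myDv (myDv F (0,1)) (0,1) (t,x)) :=
      funext fun x => by rw [hSps t x]
    rw [hfun]
    exact (((hrd s).pow 2).mul ((((hasDerivAt_const s t).mul
      (myHasDerivAt_snd h2ts t s)).add (myHasDerivAt_snd h1s t s)).add
      ((hasDerivAt_id s).mul (myHasDerivAt_snd h2ss t s)))).deriv.trans
      (by simp only [id_eq, Pi.pow_apply, Pi.mul_apply, Pi.add_apply]; push_cast; ring)
  -- symmetry of mixed partials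
  have hsym2 : myDv (myDv F (0,1)) (1,0) = myDv (myDv F (1,0)) (0,1) :=
    funext fun p => myDv_symm hφ _ _ p
  have hsym3a : myDv (myDv (myDv F (1,0)) (0,1)) (1,0)
      = myDv (myDv (myDv F (1,0)) (1,0)) (0,1) :=
    funext fun p => myDv_symm h1t _ _ p
  have hsym3b : myDv (myDv (myDv F (0,1)) (0,1)) (1,0)
      = myDv (myDv (myDv F (0,1)) (1,0)) (0,1) :=
    funext fun p => myDv_symm h1s _ _ p
  -- assemble
  have hgoal : Svf (Box M r φ) t s
      = t * pd_t (Box M r φ) t s + s * pd_s (Box M r φ) t s := rfl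
  rw [hgoal, hBt, hBs, hBoxAll t s, hps t s]
  show -(1 - muS M r s)⁻¹ * pd_t (pd_t (Svf φ)) t s
      + (1 - muS M r s)⁻¹ * ((r s) ^ 2)⁻¹
        * deriv (fun x => (r x) ^ 2 * pd_s (Svf φ) t x) s - _ = _
  rw [hStt, hSGs]
  simp only [muS, hsym2, hsym3a, hsym3b]
  rw [hrw s]
  have hR := hrne s
  have hS := hsub s
  field_simp
  ring
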